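/- Fix l > 0, set w(θ) = 1 + l² cos²θ, and let f : ℝ² → ℝ³ be f(t,θ) = ( e^{−t} cos(lt) cos θ, e^{−t} sin θ, e^{−t} sin(lt) cos θ ). Define n : ℝ² → ℝ³ by n(t,θ) = ( −(l cos(lt) cos²θ − sin(lt))/√w, −(l cosθ sinθ)/√w, −(cos(lt) + l sin(lt) cos²θ)/√w ). Then for all (t,θ): |n| = 1, ⟨n, ∂_t f⟩ = 0 and ⟨n, ∂_θ f⟩ = 0; the second fundamental form entries A₁₁ := −⟨∂_t f, ∂_t n⟩, A₁₂ := −⟨∂_t f, ∂_θ n⟩, A₂₁ := −⟨∂_θ f, ∂_t n⟩, A₂₂ := −⟨∂_θ f, ∂_θ n⟩ satisfy A₁₁ = e^{−t} l cosθ √w, A₁₂ = A₂₁ = e^{−t} l sinθ / √w, A₂₂ = e^{−t} l cosθ / √w; and consequently the mean curvature H := A₁₁/g₁₁ + A₂₂/g₂₂ equals 2 e^{t} l cosθ / √w, where g₁₁ = e^{−2t} w and g₂₂ = e^{−2t} are the diagonal entries of the pullback metric of f. -/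

import Mathlib

/-!
Everything is explicit: the partial derivatives of `f` and `n` are computed componentwise, and
each claimed identity becomes, after clearing the denominators `√w`, a polynomial identity in
`cos (l t), sin (l t), cos θ, sin θ, e^{-t}, √w` that holds modulo the Pythagorean relations and
`(√w)² = 1 + l² cos² θ`.
-/

open Real

noncomputable section

open scoped RealInnerProductSpace

/-- The explicit Willmore surface `f(t,θ)`. -/
def fSurf (l : ℝ) : ℝ × ℝ → EuclideanSpace ℝ (Fin 3) := fun p =>
  (WithLp.equiv 2 (Fin 3 → ℝ)).symm
    ![Real.exp (-p.1) * Real.cos (l * p.1) * Real.cos p.2,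
      Real.exp (-p.1) * Real.sin p.2,
      Real.exp (-p.1) * Real.sin (l * p.1) * Real.cos p.2]

/-- `w(θ) = 1 + l² cos² θ`. -/
def wFun (l : ℝ) (θ : ℝ) : ℝ := 1 + l ^ 2 * Real.cos θ ^ 2

/-- The unit normal of the explicit Willmore surface. -/
def nSurf (l : ℝ) : ℝ × ℝ → EuclideanSpace ℝ (Fin 3) := fun p =>
  (WithLp.equiv 2 (Fin 3 → ℝ)).symm
    ![-((l * Real.cos (l * p.1) * Real.cos p.2 ^ 2 - Real.sin (l * p.1)) /
        Real.sqrt (wFun l p.2)),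
      -((l * Real.cos p.2 * Real.sin p.2) / Real.sqrt (wFun l p.2)),
      -((Real.cos (l * p.1) + l * Real.sin (l * p.1) * Real.cos p.2 ^ 2) /
        Real.sqrt (wFun l p.2))]

lemma hasDerivAt_euclideanSpace_fin3 {g₁ g₂ g₃ : ℝ → ℝ} {g₁' g₂' g₃' x : ℝ}
    (h₁ : HasDerivAt g₁ g₁' x) (h₂ : HasDerivAt g₂ g₂' x) (h₃ : HasDerivAt g₃ g₃' x) :
    HasDerivAt (fun s => !₂[g₁ s, g₂ s, g₃ s]) !₂[g₁', g₂', g₃'] x := by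
  have h : HasDerivAt (fun s => (![g₁ s, g₂ s, g₃ s] : Fin 3 → ℝ)) ![g₁', g₂', g₃'] x := by
    rw [hasDerivAt_pi]
    intro i
    fin_cases i <;> simpa
  exact (PiLp.continuousLinearEquiv 2 ℝ (fun _ : Fin 3 => ℝ)).symm.hasFDerivAt.comp_hasDerivAt x h

lemma inner_euclideanSpace_fin3 (a b c a' b' c' : ℝ) :
    ⟪!₂[a, b, c], !₂[a', b', c']⟫ = a * a' + b * b' + c * c' := by
  simp only [PiLp.inner_apply, Fin.sum_univ_three, Matrix.cons_val_zero, Matrix.cons_val_one,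
    Matrix.cons_val_two, Matrix.head_cons, Matrix.tail_cons, RCLike.inner_apply, conj_trivial]
  ring

lemma norm_euclideanSpace_fin3 (a b c : ℝ) : ‖!₂[a, b, c]‖ = √(a ^ 2 + b ^ 2 + c ^ 2) := by
  rw [EuclideanSpace.norm_eq]
  simp [Fin.sum_univ_three, Real.norm_eq_abs, sq_abs]

section Surface

variable (l t θ : ℝ)

lemma wFun_pos : 0 < wFun l θ := by
  unfold wFun
  positivity

lemma sqrt_wFun_ne_zero : √(wFun l θ) ≠ 0 :=
  (sqrt_pos.mpr (wFun_pos l θ)).ne'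

lemma nSurf_apply :
    nSurf l (t, θ) = !₂[-((l * cos (l * t) * cos θ ^ 2 - sin (l * t)) / √(wFun l θ)),
      -((l * cos θ * sin θ) / √(wFun l θ)),
      -((cos (l * t) + l * sin (l * t) * cos θ ^ 2) / √(wFun l θ))] :=
  rfl

lemma sq_sqrt_wFun : √(wFun l θ) ^ 2 = 1 + l ^ 2 * cos θ ^ 2 :=
  sq_sqrt (wFun_pos l θ).le

lemma hasDerivAt_fSurf_fst :
    HasDerivAt (fun s => fSurf l (s, θ))
      !₂[-exp (-t) * (cos (l * t) + l * sin (l * t)) * cos θ,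
        -exp (-t) * sin θ,
        exp (-t) * (l * cos (l * t) - sin (l * t)) * cos θ] t := by
  have hE : HasDerivAt (fun s => exp (-s)) (-exp (-t)) t := by
    simpa using (hasDerivAt_neg t).exp
  have hc : HasDerivAt (fun s => cos (l * s)) (-sin (l * t) * l) t := by
    simpa using ((hasDerivAt_id t).const_mul l).cos
  have hs : HasDerivAt (fun s => sin (l * s)) (cos (l * t) * l) t := by
    simpa using ((hasDerivAt_id t).const_mul l).sin
  exact hasDerivAt_euclideanSpace_fin3
    (((hE.mul hc).mul_const (cos θ)).congr_deriv (by ring))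
    ((hE.mul_const (sin θ)).congr_deriv (by ring))
    (((hE.mul hs).mul_const (cos θ)).congr_deriv (by ring))

lemma hasDerivAt_fSurf_snd :
    HasDerivAt (fun s => fSurf l (t, s))
      !₂[-exp (-t) * cos (l * t) * sin θ, exp (-t) * cos θ, -exp (-t) * sin (l * t) * sin θ] θ :=
  hasDerivAt_euclideanSpace_fin3
    (((hasDerivAt_cos θ).const_mul (exp (-t) * cos (l * t))).congr_deriv (by ring))
    ((hasDerivAt_sin θ).const_mul (exp (-t)))
    (((hasDerivAt_cos θ).const_mul (exp (-t) * sin (l * t))).congr_deriv (by ring))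

lemma hasDerivAt_nSurf_fst :
    HasDerivAt (fun s => nSurf l (s, θ))
      !₂[l * (l * sin (l * t) * cos θ ^ 2 + cos (l * t)) / √(wFun l θ),
        0,
        l * (sin (l * t) - l * cos (l * t) * cos θ ^ 2) / √(wFun l θ)] t := by
  have hc : HasDerivAt (fun s => cos (l * s)) (-sin (l * t) * l) t := by
    simpa using ((hasDerivAt_id t).const_mul l).cos
  have hs : HasDerivAt (fun s => sin (l * s)) (cos (l * t) * l) t := by
    simpa using ((hasDerivAt_id t).const_mul l).sin
  exact hasDerivAt_euclideanSpace_fin3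
    (((((hc.const_mul l).mul_const (cos θ ^ 2)).sub hs).div_const (√(wFun l θ))).neg.congr_deriv
      (by ring))
    (hasDerivAt_const t (-(l * cos θ * sin θ / √(wFun l θ))))
    (((hc.add ((hs.const_mul l).mul_const (cos θ ^ 2))).div_const (√(wFun l θ))).neg.congr_deriv
      (by ring))

lemma hasDerivAt_nSurf_snd :
    HasDerivAt (fun s => nSurf l (t, s))
      !₂[l * cos θ * sin θ * (2 * cos (l * t) + l ^ 2 * cos (l * t) * cos θ ^ 2
            + l * sin (l * t)) / √(wFun l θ) ^ 3,
        -(l * (cos θ ^ 2 - sin θ ^ 2 + l ^ 2 * cos θ ^ 4)) / √(wFun l θ) ^ 3,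
        l * cos θ * sin θ * (2 * sin (l * t) + l ^ 2 * sin (l * t) * cos θ ^ 2
            - l * cos (l * t)) / √(wFun l θ) ^ 3] θ := by
  have hq := sq_sqrt_wFun l θ
  have hq0 := sqrt_wFun_ne_zero l θ
  have hcos2 : HasDerivAt (fun x => cos x ^ 2) (2 * cos θ * -sin θ) θ := by
    simpa using (hasDerivAt_cos θ).fun_pow 2
  have hsqrt : HasDerivAt (fun x => √(wFun l x))
      (l ^ 2 * (2 * cos θ * -sin θ) / (2 * √(wFun l θ))) θ :=
    ((hcos2.const_mul (l ^ 2)).const_add 1).sqrt (wFun_pos l θ).ne'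
  refine hasDerivAt_euclideanSpace_fin3
    ((((hcos2.const_mul (l * cos (l * t))).sub_const (sin (l * t))).div hsqrt hq0).neg.congr_deriv ?_)
    (((((hasDerivAt_cos θ).const_mul l).fun_mul (hasDerivAt_sin θ)).div hsqrt hq0).neg.congr_deriv ?_)
    ((((hcos2.const_mul (l * sin (l * t))).const_add (cos (l * t))).div hsqrt hq0).neg.congr_deriv ?_)
  · field_simp
    linear_combination 2 * l * cos θ * sin θ * cos (l * t) * hq
  · field_simp
    linear_combination -l * (cos θ ^ 2 - sin θ ^ 2) * hq
  · field_simp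
    linear_combination 2 * l * cos θ * sin θ * sin (l * t) * hq

lemma norm_nSurf : ‖nSurf l (t, θ)‖ = 1 := by
  have hw := wFun_pos l θ
  rw [nSurf_apply, norm_euclideanSpace_fin3, sqrt_eq_one]
  field_simp
  rw [sq_sqrt hw.le, wFun]
  linear_combination (l ^ 2 * cos θ ^ 4 + 1) * sin_sq_add_cos_sq (l * t)
    + l ^ 2 * cos θ ^ 2 * sin_sq_add_cos_sq θ

lemma inner_nSurf_deriv_fSurf_fst : ⟪nSurf l (t, θ), deriv (fun s => fSurf l (s, θ)) t⟫ = 0 := by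
  have hq0 := sqrt_wFun_ne_zero l θ
  rw [(hasDerivAt_fSurf_fst l t θ).deriv, nSurf_apply, inner_euclideanSpace_fin3]
  field_simp
  linear_combination exp (-t) * cos θ * l * (cos θ ^ 2 - 1) * sin_sq_add_cos_sq (l * t)
    + exp (-t) * cos θ * l * sin_sq_add_cos_sq θ

lemma inner_nSurf_deriv_fSurf_snd : ⟪nSurf l (t, θ), deriv (fun s => fSurf l (t, s)) θ⟫ = 0 := by
  have hq0 := sqrt_wFun_ne_zero l θ
  rw [(hasDerivAt_fSurf_snd l t θ).deriv, nSurf_apply, inner_euclideanSpace_fin3]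
  field_simp
  linear_combination exp (-t) * sin θ * l * cos θ ^ 2 * sin_sq_add_cos_sq (l * t)

lemma neg_inner_deriv_fSurf_fst_deriv_nSurf_fst :
    -⟪deriv (fun s => fSurf l (s, θ)) t, deriv (fun s => nSurf l (s, θ)) t⟫
      = exp (-t) * l * cos θ * √(wFun l θ) := by
  have hq0 := sqrt_wFun_ne_zero l θ
  rw [(hasDerivAt_fSurf_fst l t θ).deriv, (hasDerivAt_nSurf_fst l t θ).deriv,
    inner_euclideanSpace_fin3]
  field_simp
  linear_combination l * cos θ * (1 + l ^ 2 * cos θ ^ 2) * sin_sq_add_cos_sq (t * l)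
    - l * cos θ * sq_sqrt_wFun l θ

lemma neg_inner_deriv_fSurf_fst_deriv_nSurf_snd :
    -⟪deriv (fun s => fSurf l (s, θ)) t, deriv (fun s => nSurf l (t, s)) θ⟫
      = exp (-t) * l * sin θ / √(wFun l θ) := by
  have hq0 := sqrt_wFun_ne_zero l θ
  rw [(hasDerivAt_fSurf_fst l t θ).deriv, (hasDerivAt_nSurf_snd l t θ).deriv,
    inner_euclideanSpace_fin3]
  field_simp
  linear_combination l * sin θ * (cos θ ^ 2 * (l ^ 2 * (1 + cos θ ^ 2) + 2) * sin_sq_add_cos_sq (t * l)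
    + sin_sq_add_cos_sq θ - sq_sqrt_wFun l θ)

lemma neg_inner_deriv_fSurf_snd_deriv_nSurf_fst :
    -⟪deriv (fun s => fSurf l (t, s)) θ, deriv (fun s => nSurf l (s, θ)) t⟫
      = exp (-t) * l * sin θ / √(wFun l θ) := by
  have hq0 := sqrt_wFun_ne_zero l θ
  rw [(hasDerivAt_fSurf_snd l t θ).deriv, (hasDerivAt_nSurf_fst l t θ).deriv,
    inner_euclideanSpace_fin3]
  field_simp
  linear_combination l * sin θ * sin_sq_add_cos_sq (t * l)

lemma neg_inner_deriv_fSurf_snd_deriv_nSurf_snd :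
    -⟪deriv (fun s => fSurf l (t, s)) θ, deriv (fun s => nSurf l (t, s)) θ⟫
      = exp (-t) * l * cos θ / √(wFun l θ) := by
  have hq0 := sqrt_wFun_ne_zero l θ
  rw [(hasDerivAt_fSurf_snd l t θ).deriv, (hasDerivAt_nSurf_snd l t θ).deriv,
    inner_euclideanSpace_fin3]
  field_simp
  linear_combination l * cos θ * (sin θ ^ 2 * (2 + l ^ 2 * cos θ ^ 2) * sin_sq_add_cos_sq (t * l)
    + (1 + l ^ 2 * cos θ ^ 2) * sin_sq_add_cos_sq θ - sq_sqrt_wFun l θ)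

lemma meanCurvature_eq :
    exp (-t) * l * cos θ * √(wFun l θ) / (exp (-(2 * t)) * wFun l θ)
      + exp (-t) * l * cos θ / √(wFun l θ) / exp (-(2 * t))
      = 2 * exp t * l * cos θ / √(wFun l θ) := by
  have hq0 := sqrt_wFun_ne_zero l θ
  have hexp : exp (-(2 * t)) = exp (-t) ^ 2 := by
    rw [← exp_nat_mul]
    ring_nf
  have hinv : exp t * exp (-t) = 1 := by
    rw [← exp_add, add_neg_cancel, exp_zero]
  have hw := (wFun_pos l θ).ne'
  rw [hexp]
  field_simp
  rw [sq_sqrt (wFun_pos l θ).le]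
  linear_combination -2 * l * cos θ * wFun l θ * hinv

end Surface

theorem stmt18_general (l : ℝ) :
    ∀ t θ : ℝ,
      let ft := deriv (fun s => fSurf l (s, θ)) t
      let fθ := deriv (fun s => fSurf l (t, s)) θ
      let nt := deriv (fun s => nSurf l (s, θ)) t
      let nθ := deriv (fun s => nSurf l (t, s)) θ
      ‖nSurf l (t, θ)‖ = 1 ∧
      ⟪nSurf l (t, θ), ft⟫ = 0 ∧
      ⟪nSurf l (t, θ), fθ⟫ = 0 ∧
      -⟪ft, nt⟫ = Real.exp (-t) * l * Real.cos θ * Real.sqrt (wFun l θ) ∧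
      -⟪ft, nθ⟫ = Real.exp (-t) * l * Real.sin θ / Real.sqrt (wFun l θ) ∧
      -⟪fθ, nt⟫ = Real.exp (-t) * l * Real.sin θ / Real.sqrt (wFun l θ) ∧
      -⟪fθ, nθ⟫ = Real.exp (-t) * l * Real.cos θ / Real.sqrt (wFun l θ) ∧
      (-⟪ft, nt⟫) / (Real.exp (-(2 * t)) * wFun l θ) + (-⟪fθ, nθ⟫) / Real.exp (-(2 * t))
        = 2 * Real.exp t * l * Real.cos θ / Real.sqrt (wFun l θ) := by
  intro t θ ft fθ nt nθ
  refine ⟨norm_nSurf l t θ, inner_nSurf_deriv_fSurf_fst l t θ, inner_nSurf_deriv_fSurf_snd l t θ,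
    neg_inner_deriv_fSurf_fst_deriv_nSurf_fst l t θ, neg_inner_deriv_fSurf_fst_deriv_nSurf_snd l t θ,
    neg_inner_deriv_fSurf_snd_deriv_nSurf_fst l t θ, neg_inner_deriv_fSurf_snd_deriv_nSurf_snd l t θ,
    ?_⟩
  rw [neg_inner_deriv_fSurf_fst_deriv_nSurf_fst, neg_inner_deriv_fSurf_snd_deriv_nSurf_snd]
  exact meanCurvature_eq l t θ

/-- The unit normal, the second fundamental form and the mean curvature of the explicit
Willmore surface (Section 6.1). -/
theorem stmt18 (l : ℝ) (hl : 0 < l) :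
    ∀ t θ : ℝ,
      let ft := deriv (fun s => fSurf l (s, θ)) t
      let fθ := deriv (fun s => fSurf l (t, s)) θ
      let nt := deriv (fun s => nSurf l (s, θ)) t
      let nθ := deriv (fun s => nSurf l (t, s)) θ
      ‖nSurf l (t, θ)‖ = 1 ∧
      ⟪nSurf l (t, θ), ft⟫ = 0 ∧
      ⟪nSurf l (t, θ), fθ⟫ = 0 ∧
      -⟪ft, nt⟫ = Real.exp (-t) * l * Real.cos θ * Real.sqrt (wFun l θ) ∧
      -⟪ft, nθ⟫ = Real.exp (-t) * l * Real.sin θ / Real.sqrt (wFun l θ) ∧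
      -⟪fθ, nt⟫ = Real.exp (-t) * l * Real.sin θ / Real.sqrt (wFun l θ) ∧
      -⟪fθ, nθ⟫ = Real.exp (-t) * l * Real.cos θ / Real.sqrt (wFun l θ) ∧
      (-⟪ft, nt⟫) / (Real.exp (-(2 * t)) * wFun l θ) + (-⟪fθ, nθ⟫) / Real.exp (-(2 * t))
        = 2 * Real.exp t * l * Real.cos θ / Real.sqrt (wFun l θ) :=
  stmt18_general l

end
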